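/- arXiv:2210.02566 — 3 statements merged into one kernel-verified Lean document; each statement's English description precedes it below -/
import Mathlib

section
/- Let R = 𝓡(d_R(t), h_R(t)) and S = 𝓡(d_S(t), h_S(t)) be Riordan arrays over a commutative ring, and suppose A_R(t) and A_S(t) are power series satisfying the A-sequence relations h_R(t) = t·A_R(h_R(t)) and h_S(t) = t·A_S(h_S(t)). Let d_{n,k} denote the (n,k)-entry of the matrix sum R + S, i.e., d_{n,k} = [t^n](d_R·h_R^k) + [t^n](d_S·h_S^k). Then for all n, k ≥ 0: d_{n+2,k+2} = ∑_{j=k}^{n+1} d_{n+1,j+1}·((A_R)_{j−k} + (A_S)_{j−k}) − ∑_{j=k}^{n+1} d_{n,j}·(∑_{p+q=j−k} (A_R)_p·(A_S)_q), where (A)_m denotes the coefficient of t^m in A(t). -/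
/-!
Write `r n k = [tⁿ] f hᵏ` for a Riordan array `𝓡(f, h)` with A-sequence `A`. The relation
`h = t·A(h)` gives `f hᵏ⁺¹ = t · f hᵏ A(h)`, i.e. `r (n+1) (k+1) = ∑ᵢ r n (k+i) Aᵢ`. Multiplying
instead by `B(h)` for an arbitrary series `B` and using `A(h) B(h) = (AB)(h)` gives
`∑ᵢ r (n+1) (k+i+1) Bᵢ = ∑ᵢ r n (k+i) (AB)ᵢ`. Subtracting, a single Riordan array satisfies the
sumray recurrence with the pair `(A, B)`; this identity is linear in the array and symmetric in
`A, B`, so the instances `(R; A_R, A_S)` and `(S; A_S, A_R)` add up to the theorem. All sums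
are finite because `r n j = 0` for `j > n`.
-/

open PowerSeries Finset

/-- Composition (substitution) `f(g(t))` of formal power series, which is the
honest substitution whenever the inner series `g` has zero constant term. -/
noncomputable def PowerSeries.compose {R : Type*} [CommSemiring R] (f g : R⟦X⟧) : R⟦X⟧ :=
  PowerSeries.mk fun n => ∑ k ∈ Finset.range (n + 1), coeff k f * coeff n (g ^ k)

namespace PowerSeries

section CommSemiring

variable {R : Type*} [CommSemiring R]

theorem coeff_mul_pow_eq_zero_of_lt {f h : R⟦X⟧} (hh : constantCoeff h = 0) {n j : ℕ}
    (hnj : n < j) : coeff n (f * h ^ j) = 0 :=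
  X_pow_dvd_iff.mp ((pow_dvd_pow_of_dvd (X_dvd_iff.mpr hh) j).mul_left f) n hnj

theorem coeff_compose_eq_sum_range {f g : R⟦X⟧} (hg : constantCoeff g = 0) {n N : ℕ}
    (hN : n < N) : coeff n (f.compose g) = ∑ i ∈ range N, coeff i f * coeff n (g ^ i) := by
  rw [compose, coeff_mk]
  refine (eventually_constant_sum (fun i hi => ?_) hN).symm
  rw [← one_mul (g ^ i), coeff_mul_pow_eq_zero_of_lt hg (by omega), mul_zero]

theorem coeff_mul_compose {F f h : R⟦X⟧} (hh : constantCoeff h = 0) (n : ℕ) :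
    coeff n (F * f.compose h) = ∑ i ∈ range (n + 1), coeff n (F * h ^ i) * coeff i f := by
  calc coeff n (F * f.compose h)
      = ∑ p ∈ antidiagonal n,
          coeff p.1 F * ∑ i ∈ range (n + 1), coeff i f * coeff p.2 (h ^ i) := by
        rw [coeff_mul]
        refine sum_congr rfl fun p hp => ?_
        rw [coeff_compose_eq_sum_range hh (Finset.Nat.antidiagonal.snd_lt hp)]
    _ = ∑ i ∈ range (n + 1), coeff n (F * h ^ i) * coeff i f := by
        simp only [mul_sum, coeff_mul, sum_mul]
        rw [sum_comm]
        exact sum_congr rfl fun i _ => sum_congr rfl fun p _ => by ring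

theorem coeff_mul_pow_mul_compose {f h A : R⟦X⟧} (hh : constantCoeff h = 0) {n k N : ℕ}
    (hN : n < k + N) :
    coeff n (f * h ^ k * A.compose h) =
      ∑ i ∈ range N, coeff n (f * h ^ (k + i)) * coeff i A := by
  have hvanish : ∀ i ≥ n + 1 - k, coeff n (f * h ^ (k + i)) * coeff i A = 0 := fun i hi => by
    rw [coeff_mul_pow_eq_zero_of_lt hh (by omega), zero_mul]
  rw [coeff_mul_compose hh]
  simp only [mul_assoc, ← pow_add]
  exact (eventually_constant_sum hvanish (by omega)).trans
    (eventually_constant_sum hvanish (by omega)).symm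

theorem mul_pow_succ_eq_X_mul {f h A : R⟦X⟧} (hA : h = X * A.compose h) (k : ℕ) :
    f * h ^ (k + 1) = X * (f * h ^ k * A.compose h) :=
  calc f * h ^ (k + 1) = f * h ^ k * (X * A.compose h) := by rw [← hA, pow_succ, mul_assoc]
    _ = X * (f * h ^ k * A.compose h) := by ring

end CommSemiring

section CommRing

variable {R : Type*} [CommRing R]

theorem compose_eq_subst {f g : R⟦X⟧} (hg : constantCoeff g = 0) : f.compose g = f.subst g := by
  ext n
  rw [coeff_subst' (.of_constantCoeff_zero' hg), finsum_eq_sum_of_support_subset _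
    (s := range (n + 1)) fun i hi => ?_, coeff_compose_eq_sum_range hg n.lt_succ_self]
  · rfl
  · contrapose! hi
    rw [coe_range, Set.mem_Iio, not_lt] at hi
    rw [Function.notMem_support, ← one_mul (g ^ i), coeff_mul_pow_eq_zero_of_lt hg (by omega),
      smul_zero]

theorem compose_mul {f f' g : R⟦X⟧} (hg : constantCoeff g = 0) :
    (f * f').compose g = f.compose g * f'.compose g := by
  simp only [compose_eq_subst hg, subst_mul (.of_constantCoeff_zero' hg)]

theorem coeff_succ_mul_pow_succ_mul_compose {f h A B : R⟦X⟧} (hh : constantCoeff h = 0)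
    (hA : h = X * A.compose h) (n k : ℕ) :
    coeff (n + 1) (f * h ^ (k + 1) * B.compose h) = coeff n (f * h ^ k * (A * B).compose h) := by
  rw [mul_pow_succ_eq_X_mul hA, mul_assoc X, coeff_succ_X_mul, compose_mul hh, mul_assoc]

theorem coeff_add_two_mul_pow_add_two {f h A : R⟦X⟧} (hh : constantCoeff h = 0)
    (hA : h = X * A.compose h) (B : R⟦X⟧) {n k M : ℕ} (hM : n < k + M) :
    coeff (n + 2) (f * h ^ (k + 2)) =
      ∑ i ∈ range M, coeff (n + 1) (f * h ^ (k + i + 1)) * (coeff i A + coeff i B) -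
        ∑ i ∈ range M, coeff n (f * h ^ (k + i)) * coeff i (A * B) := by
  have hA_row : coeff (n + 2) (f * h ^ (k + 2)) =
      ∑ i ∈ range M, coeff (n + 1) (f * h ^ (k + i + 1)) * coeff i A := by
    rw [mul_pow_succ_eq_X_mul hA, coeff_succ_X_mul,
      coeff_mul_pow_mul_compose hh (N := M) (by omega)]
    simp only [add_right_comm k 1]
  have hB_row : ∑ i ∈ range M, coeff (n + 1) (f * h ^ (k + i + 1)) * coeff i B =
      ∑ i ∈ range M, coeff n (f * h ^ (k + i)) * coeff i (A * B) := by
    simp only [← add_right_comm k 1]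
    rw [← coeff_mul_pow_mul_compose hh (by omega), coeff_succ_mul_pow_succ_mul_compose hh hA,
      coeff_mul_pow_mul_compose hh hM]
  rw [hA_row, ← hB_row]
  simp only [mul_add, sum_add_distrib, add_sub_cancel_right]

end CommRing

end PowerSeries

theorem riordan_sumray_recurrence_general {R : Type*} [CommRing R]
    (dR hR dS hS AR AS : R⟦X⟧)
    (hhR0 : constantCoeff hR = 0)
    (hhS0 : constantCoeff hS = 0)
    (hAR : hR = X * AR.compose hR) (hAS : hS = X * AS.compose hS)
    (d : ℕ → ℕ → R)
    (hd : ∀ n k : ℕ, d n k = coeff n (dR * hR ^ k) + coeff n (dS * hS ^ k)) :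
    ∀ n k : ℕ,
      d (n + 2) (k + 2) =
        (∑ j ∈ Finset.Icc k (n + 1),
            d (n + 1) (j + 1) * (coeff (j - k) AR + coeff (j - k) AS)) -
        (∑ j ∈ Finset.Icc k (n + 1),
            d n j * ∑ pq ∈ Finset.HasAntidiagonal.antidiagonal (j - k),
              coeff pq.1 AR * coeff pq.2 AS) := by
  intro n k
  have hIcc (F : ℕ → R) :
      ∑ j ∈ Icc k (n + 1), F j = ∑ i ∈ range (n + 2 - k), F (k + i) := by
    rw [← Ico_add_one_right_eq_Icc, sum_Ico_eq_sum_range]; rfl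
  have hM : n < k + (n + 2 - k) := by omega
  simp only [hd, hIcc, add_tsub_cancel_left, ← coeff_mul]
  rw [coeff_add_two_mul_pow_add_two hhR0 hAR AS hM, coeff_add_two_mul_pow_add_two hhS0 hAS AR hM,
    mul_comm AS AR]
  simp only [add_mul, mul_add, sum_add_distrib]
  ring

/-- the second-order recurrence for Riordan sumrays.  If `R = 𝓡(dR, hR)`
and `S = 𝓡(dS, hS)` are Riordan arrays with A-sequences `AR`, `AS`
(so `hR = t·AR(hR)` and `hS = t·AS(hS)`), and `d n k` denotes the `(n,k)`-entry of the
entrywise sum `R + S`, then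
`d_{n+2,k+2} = ∑_{j=k}^{n+1} d_{n+1,j+1}·((AR)_{j−k}+(AS)_{j−k})
             − ∑_{j=k}^{n+1} d_{n,j}·∑_{p+q=j−k}(AR)_p·(AS)_q`. -/
theorem riordan_sumray_recurrence {R : Type*} [CommRing R]
    (dR hR dS hS AR AS : R⟦X⟧)
    (hdR : constantCoeff dR ≠ 0) (hhR0 : constantCoeff hR = 0)
    (hhR1 : coeff 1 hR ≠ 0)
    (hdS : constantCoeff dS ≠ 0) (hhS0 : constantCoeff hS = 0)
    (hhS1 : coeff 1 hS ≠ 0)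
    (hAR0 : constantCoeff AR ≠ 0) (hAS0 : constantCoeff AS ≠ 0)
    (hAR : hR = X * AR.compose hR) (hAS : hS = X * AS.compose hS)
    (d : ℕ → ℕ → R)
    (hd : ∀ n k : ℕ, d n k = coeff n (dR * hR ^ k) + coeff n (dS * hS ^ k)) :
    ∀ n k : ℕ,
      d (n + 2) (k + 2) =
        (∑ j ∈ Finset.Icc k (n + 1),
            d (n + 1) (j + 1) * (coeff (j - k) AR + coeff (j - k) AS)) -
        (∑ j ∈ Finset.Icc k (n + 1),
            d n j * ∑ pq ∈ Finset.HasAntidiagonal.antidiagonal (j - k),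
              coeff pq.1 AR * coeff pq.2 AS) :=
  riordan_sumray_recurrence_general dR hR dS hS AR AS hhR0 hhS0 hAR hAS d hd
end

section
/- Define the operation Der on pairs of formal power series over a commutative ring by Der(d, h) = (h', t·d), where h' is the formal derivative. Then for every power series d(t) = ∑_i d_i t^i and every m ≥ 0, the (2m+1)-fold iterate satisfies Der^{2m+1}(d(t), t) = (1, t·∑_{i≥0} d_i·(i+1)^m·t^i). That is, iterating Der an odd number 2m+1 of times on the Appell-subgroup Riordan array 𝓡(d(t), t) yields the Lagrange-subgroup Riordan array 𝓡(1, t·∑_{i≥0} d_i (i+1)^m t^i). -/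
open PowerSeries

/-- The operation `Der` on pairs of formal power series:
`Der(d, h) = (h', t·d)`. -/
noncomputable def riordanDer {R : Type*} [CommRing R] (p : R⟦X⟧ × R⟦X⟧) : R⟦X⟧ × R⟦X⟧ :=
  (p.2.derivativeFun, X * p.1)

namespace PowerSeries

variable {R : Type*} [CommSemiring R]

theorem derivative_X_mul (f : R⟦X⟧) :
    d⁄dX R (X * f) = mk fun i => coeff i f * ((i + 1 : ℕ) : R) := by
  ext n
  rw [coeff_derivative, coeff_succ_X_mul, coeff_mk, Nat.cast_succ]

end PowerSeries

section

variable {R : Type*} [CommRing R]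

theorem riordanDer_apply (p : R⟦X⟧ × R⟦X⟧) : riordanDer p = (d⁄dX R p.2, X * p.1) := rfl

theorem riordanDer_appell (d : R⟦X⟧) : riordanDer (d, X) = (1, X * d) := by
  rw [riordanDer_apply, derivative_X]

theorem riordanDer_iterate_two_appell (d : R⟦X⟧) :
    riordanDer^[2] (d, X) = (mk fun i => coeff i d * ((i + 1 : ℕ) : R), X) := by
  rw [Function.iterate_succ_apply', Function.iterate_one, riordanDer_appell, riordanDer_apply,
    derivative_X_mul, mul_one]

theorem riordanDer_iterate_two_mul_appell (d : R⟦X⟧) (m : ℕ) :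
    riordanDer^[2 * m] (d, X) = (mk fun i => coeff i d * ((i + 1 : ℕ) : R) ^ m, X) := by
  induction m generalizing d with
  | zero =>
    simp only [mul_zero, Function.iterate_zero_apply, pow_zero, mul_one]
    exact Prod.ext (ext fun n => (coeff_mk n fun i => coeff i d).symm) rfl
  | succ m ih =>
    rw [mul_add_one, Function.iterate_add_apply, riordanDer_iterate_two_appell, ih]
    simp only [coeff_mk, mul_assoc, pow_succ']

end

/-- odd iterates of `Der` on the Appell-subgroup array `𝓡(d(t), t)`:
`Der^{2m+1}(𝓡(d, t)) = 𝓡(1, t·∑_i d_i (i+1)^m t^i)`. -/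
theorem der_odd_iterate_appell {R : Type*} [CommRing R] (d : R⟦X⟧) (m : ℕ) :
    riordanDer^[2 * m + 1] (d, (X : R⟦X⟧)) =
      ((1 : R⟦X⟧),
        X * PowerSeries.mk (fun i => coeff i d * ((i + 1 : ℕ) : R) ^ m)) := by
  rw [Function.iterate_succ_apply', riordanDer_iterate_two_mul_appell, riordanDer_appell]
end

section
/- For every n ≥ 3: ∑_{i=3}^{n} (C_i − C_{i−1} − C_{i−2})·F_{n−i} = C_n − F_n, where C_i is the i-th Catalan number and F_m = fib(m+1) (Fibonacci with convention F_0 = F_1 = 1). Equivalently: ∑_{i=3}^{n} (catalan(i) − catalan(i−1) − catalan(i−2))·fib(n−i+1) = catalan(n) − fib(n+1). (Combinatorially: both sides count Dyck paths of semilength n containing at least one ascent-descent block other than UD or UUDD.) -/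
/-!
The convolution `u = fibConv a` of a sequence with `n ↦ fib (n + 1)` satisfies
`u (n + 2) = u (n + 1) + u n + a (n + 2)`, because the Fibonacci numbers do. Take
`a i = c i - c (i - 1) - c (i - 2)` for `i ≥ 3` and `a i = 0` otherwise; then
`n ↦ c n - fib (n + 1)` satisfies the same recurrence, and has the same initial values as soon
as `c` agrees with `n ↦ fib (n + 1)` at `0, 1, 2`, as the Catalan numbers `1, 1, 2` do.
-/

open Finset

def fibConv {R : Type*} [Semiring R] (a : ℕ → R) (n : ℕ) : R :=
  ∑ i ∈ range (n + 1), a i * Nat.fib (n - i + 1)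

section FibConv

variable {R : Type*} [Semiring R] (a : ℕ → R)

theorem fibConv_add_two (n : ℕ) :
    fibConv a (n + 2) = fibConv a (n + 1) + fibConv a n + a (n + 2) := by
  have head : ∑ i ∈ range (n + 1), a i * (Nat.fib (n + 2 - i + 1) : R) =
      ∑ i ∈ range (n + 1), a i * (Nat.fib (n + 1 - i + 1) : R) +
        ∑ i ∈ range (n + 1), a i * (Nat.fib (n - i + 1) : R) := by
    rw [← sum_add_distrib]
    refine sum_congr rfl fun i hi => ?_
    have hin : i ≤ n := Nat.lt_succ_iff.mp (mem_range.mp hi)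
    rw [show n + 2 - i + 1 = (n - i + 1) + 2 by omega,
      show n + 1 - i + 1 = (n - i + 1) + 1 by omega, Nat.fib_add_two, Nat.cast_add,
      mul_add, add_comm]
  simp only [fibConv, sum_range_succ _ (n + 2), sum_range_succ _ (n + 1), head, Nat.sub_self,
    zero_add, show n + 2 - (n + 1) + 1 = 2 by omega, Nat.fib_one, Nat.fib_two,
    Nat.cast_one, mul_one]
  abel

theorem fibConv_eq_of_rec (u : ℕ → R) (h0 : u 0 = a 0) (h1 : u 1 = a 0 + a 1)
    (h : ∀ n, u (n + 2) = u (n + 1) + u n + a (n + 2)) : ∀ n, fibConv a n = u n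
  | 0 => by simp [fibConv, h0]
  | 1 => by simp [fibConv, sum_range_succ, h1]
  | n + 2 => by
    rw [fibConv_add_two, fibConv_eq_of_rec u h0 h1 h (n + 1), fibConv_eq_of_rec u h0 h1 h n, h]

end FibConv

theorem sum_Icc_three_sub_mul_fib {R : Type*} [CommRing R] (c : ℕ → R)
    (h0 : c 0 = 1) (h1 : c 1 = 1) (h2 : c 2 = 2) (n : ℕ) :
    ∑ i ∈ Icc 3 n, (c i - c (i - 1) - c (i - 2)) * Nat.fib (n - i + 1) =
      c n - Nat.fib (n + 1) := by
  let a : ℕ → R := fun i => if 3 ≤ i then c i - c (i - 1) - c (i - 2) else 0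
  have hsum : ∑ i ∈ Icc 3 n, (c i - c (i - 1) - c (i - 2)) * Nat.fib (n - i + 1) =
      fibConv a n := by
    simp only [fibConv, a, ite_mul, zero_mul, ← sum_filter]
    congr 1
    ext i
    simp only [mem_Icc, mem_filter, mem_range]
    omega
  rw [hsum]
  refine fibConv_eq_of_rec a (fun n => c n - Nat.fib (n + 1)) ?_ ?_ (fun n => ?_) n
  · simp [a, h0]
  · simp [a, h1]
  · rcases n with _ | n
    · simp [a, h0, h1, h2, Nat.fib_add_two]
    · simp only [a, show 3 ≤ n + 1 + 2 by omega, if_true, Nat.add_sub_cancel,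
        show n + 1 + 2 - 1 = n + 2 by omega, Nat.fib_add_two, Nat.cast_add]
      ring

theorem catalan_fib_dyck_identity_general (n : ℕ) :
    ∑ i ∈ Finset.Icc 3 n,
        ((catalan i : ℤ) - catalan (i - 1) - catalan (i - 2)) * Nat.fib (n - i + 1) =
      (catalan n : ℤ) - Nat.fib (n + 1) :=
  sum_Icc_three_sub_mul_fib (fun i => (catalan i : ℤ)) (by simp) (by simp)
    (by simp [catalan_two]) n

/-- for `n ≥ 3`,
`∑_{i=3}^{n} (C_i − C_{i−1} − C_{i−2})·F_{n−i} = C_n − F_n`,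
where `C_i = catalan i` and `F_m = fib (m+1)`. -/
theorem catalan_fib_dyck_identity (n : ℕ) (hn : 3 ≤ n) :
    ∑ i ∈ Finset.Icc 3 n,
        ((catalan i : ℤ) - catalan (i - 1) - catalan (i - 2)) * Nat.fib (n - i + 1) =
      (catalan n : ℤ) - Nat.fib (n + 1) :=
  catalan_fib_dyck_identity_general n
end
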